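/- For every real M > 1: (1/√M)·artanh(1/√M) − artanh(1/M) > 1/(5·M²), where artanh denotes the inverse hyperbolic tangent. -/

import Mathlib

/-!
With `s = 1/√M` the quantity is `s·artanh s − artanh s²`, and twice it equals
`(1+s) log(1+s) + (1−s) log(1−s) − log(1+s²)`. The first two terms form the power series
`∑ s^(2k+2)/((k+1)(2k+1))`, whose coefficients are nonnegative, so they are at least
`s² + s⁴/6 + s⁶/15`; on the other hand `log(1+x) ≤ x − x²/2 + x³/3` for `x ≥ 0`. Together this
gives `s·artanh s − artanh s² ≥ s⁴/3 − 2s⁶/15 = 1/(3M²) − 2/(15M³)`, which exceeds `s⁴/5`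
because `s < 1`.
-/

noncomputable def artanh (x : ℝ) : ℝ := Real.log ((1 + x) / (1 - x)) / 2

open Finset Set

theorem Real.hasSum_one_add_mul_log_add_one_sub_mul_log {s : ℝ} (hs : |s| < 1) :
    HasSum (fun k : ℕ => s ^ (2 * k + 2) / ((k + 1) * (2 * k + 1)))
      ((1 + s) * log (1 + s) + (1 - s) * log (1 - s)) := by
  have hs2 : |s ^ 2| < 1 := by rw [abs_pow]; nlinarith [abs_nonneg s]
  -- the sum is `s · (log(1+s) − log(1−s)) + log(1−s²)`, and `2/(2k+1) − 1/(k+1) = 1/((k+1)(2k+1))`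
  have hsum := ((hasSum_log_sub_log_of_abs_lt_one hs).mul_left s).sub
    (hasSum_pow_div_log_of_abs_lt_one hs2)
  have hlog : log (1 - s ^ 2) = log (1 + s) + log (1 - s) := by
    rw [← log_mul (by grind) (by grind)]
    ring_nf
  have hterm : (fun k : ℕ => s ^ (2 * k + 2) / ((k + 1) * (2 * k + 1))) =
      fun k : ℕ => s * (2 * (1 / (2 * k + 1)) * s ^ (2 * k + 1)) - (s ^ 2) ^ (k + 1) / (k + 1) := by
    ext k
    field_simp
    ring
  rwa [hterm, show (1 + s) * log (1 + s) + (1 - s) * log (1 - s) =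
    s * (log (1 + s) - log (1 - s)) - -log (1 - s ^ 2) by rw [hlog]; ring]

theorem Real.sextic_le_one_add_mul_log_add_one_sub_mul_log {s : ℝ} (hs : |s| < 1) :
    s ^ 2 + s ^ 4 / 6 + s ^ 6 / 15 ≤ (1 + s) * log (1 + s) + (1 - s) * log (1 - s) := by
  have h := sum_le_hasSum (range 3)
    (fun k _ => div_nonneg (Even.pow_nonneg ⟨k + 1, by ring⟩ s) (by positivity))
    (hasSum_one_add_mul_log_add_one_sub_mul_log hs)
  norm_num [sum_range_succ] at h
  linarith

theorem Real.log_one_add_le_cubic {x : ℝ} (hx : 0 ≤ x) :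
    log (1 + x) ≤ x - x ^ 2 / 2 + x ^ 3 / 3 := by
  let g : ℝ → ℝ := fun y => y - y ^ 2 / 2 + y ^ 3 / 3 - log (1 + y)
  have hg : ∀ y ∈ Ici (0 : ℝ), HasDerivAt g (y ^ 3 / (1 + y)) y := by
    intro y hy
    have hy : 0 < 1 + y := by linarith [Set.mem_Ici.mp hy]
    have := ((((hasDerivAt_id' y).sub ((hasDerivAt_pow 2 y).div_const 2)).add
      ((hasDerivAt_pow 3 y).div_const 3)).sub (((hasDerivAt_id' y).const_add 1).log hy.ne'))
    refine this.congr_deriv ?_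
    field_simp
    ring
  have hmono : MonotoneOn g (Ici 0) :=
    monotoneOn_of_hasDerivWithinAt_nonneg (convex_Ici 0)
      (fun y hy => (hg y hy).continuousAt.continuousWithinAt)
      (fun y hy => (hg y (interior_subset hy)).hasDerivWithinAt)
      (fun y hy => by rw [interior_Ici] at hy; have := Set.mem_Ioi.mp hy; positivity)
  have := hmono Set.self_mem_Ici hx hx
  simp only [g] at this
  norm_num at this
  linarith

theorem two_mul_mul_artanh_sub_artanh_sq {s : ℝ} (hs : |s| < 1) :
    2 * (s * artanh s - artanh (s ^ 2)) =
      (1 + s) * Real.log (1 + s) + (1 - s) * Real.log (1 - s) - Real.log (1 + s ^ 2) := by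
  obtain ⟨hs₁, hs₂⟩ := abs_lt.mp hs
  have h1 : (0 : ℝ) < 1 + s := by linarith
  have h2 : (0 : ℝ) < 1 - s := by linarith
  have h3 : (0 : ℝ) < 1 + s ^ 2 := by positivity
  unfold artanh
  rw [Real.log_div h1.ne' h2.ne', Real.log_div h3.ne' (by nlinarith),
    show 1 - s ^ 2 = (1 + s) * (1 - s) by ring, Real.log_mul h1.ne' h2.ne']
  ring

theorem le_mul_artanh_sub_artanh_sq {s : ℝ} (hs : |s| < 1) :
    s ^ 4 / 3 - 2 * s ^ 6 / 15 ≤ s * artanh s - artanh (s ^ 2) := by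
  have h := two_mul_mul_artanh_sub_artanh_sq hs
  have hlog := Real.log_one_add_le_cubic (sq_nonneg s)
  have hseries := Real.sextic_le_one_add_mul_log_add_one_sub_mul_log hs
  nlinarith

/-- The key estimate in the comparison theorem: for `M > 1`,
`(1/√M)·artanh(1/√M) − artanh(1/M) > 1/(5M²)`. -/
theorem stmt_19 (M : ℝ) (hM : 1 < M) :
    1 / Real.sqrt M * artanh (1 / Real.sqrt M) - artanh (1 / M) > 1 / (5 * M ^ 2) := by
  set s := 1 / Real.sqrt M
  have hM0 : 0 < M := by linarith
  have hs0 : 0 < s := by positivity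
  have hs1 : s < 1 := by
    rw [div_lt_one (by positivity), Real.lt_sqrt zero_le_one]
    simpa using hM
  have hsq : s ^ 2 = 1 / M := by rw [div_pow, one_pow, Real.sq_sqrt hM0.le]
  have hrhs : 1 / (5 * M ^ 2) = s ^ 4 / 5 := by
    rw [show s ^ 4 = (s ^ 2) ^ 2 by ring, hsq]
    field_simp
  have hbound := le_mul_artanh_sub_artanh_sq (abs_lt.mpr ⟨by linarith, hs1⟩)
  have hs64 : s ^ 6 < s ^ 4 := pow_lt_pow_right_of_lt_one₀ hs0 hs1 (by norm_num)
  rw [hrhs, ← hsq]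
  nlinarith [pow_pos hs0 4]
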